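/- Theorem (dimension reduction of the conditional covariance): Let Λ be an N_G×N_G diagonal matrix with positive entries, R an N_G×N_m matrix with 0 < N_m < N_G, and suppose Σ = Rᵀ Λ R has rank N_m. Define M = I − Λ^{1/2} R Σ^{-1} Rᵀ Λ^{1/2} and the conditional covariance matrix C = Λ^{1/2} M Λ^{1/2}. Then rank(C) = N_G − N_m. -/

import Mathlib

/-!
Write `B = Λ^{1/2} R`, so that `Σ = Bᵀ B` and `M = 1 - P` with `P = B Σ⁻¹ Bᵀ`. Since `Σ` has full
rank it is invertible, and `P` is then an idempotent whose rank is `N_m` (it fixes the columns of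
`B`, which are independent). For an idempotent `P` the ranks of `1 - P` and `P` add up to the
dimension, so `rank M = N_G - N_m`; conjugating by the invertible `Λ^{1/2}` does not change it.
-/

open Matrix

namespace Matrix

variable {m n K : Type*} [Fintype n] [Field K]

theorem rank_add_le (A B : Matrix m n K) : (A + B).rank ≤ A.rank + B.rank := by
  have hle : LinearMap.range (A + B).mulVecLin ≤
      LinearMap.range A.mulVecLin ⊔ LinearMap.range B.mulVecLin := by
    rintro x ⟨v, rfl⟩
    rw [mulVecLin_add]
    exact Submodule.add_mem_sup ⟨v, rfl⟩ ⟨v, rfl⟩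
  exact (Submodule.finrank_mono hle).trans (Submodule.finrank_add_le_finrank_add_finrank _ _)

theorem isUnit_of_rank_eq_card [DecidableEq n] {A : Matrix n n K} (h : A.rank = Fintype.card n) :
    IsUnit A := by
  rw [← mulVec_surjective_iff_isUnit, ← coe_mulVecLin, ← LinearMap.range_eq_top]
  apply Submodule.eq_top_of_finrank_eq
  rw [← rank, h, Module.finrank_fintype_fun_eq_card]

theorem rank_one_sub_add_rank_of_isIdempotentElem [DecidableEq n] {P : Matrix n n K}
    (hP : IsIdempotentElem P) :
    (1 - P).rank + P.rank = Fintype.card n := by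
  apply le_antisymm
  · refine rank_add_rank_le_card_of_mul_eq_zero ?_
    rw [sub_mul, one_mul, hP.eq, sub_self]
  · calc Fintype.card n = (1 - P + P).rank := by rw [sub_add_cancel, rank_one]
      _ ≤ (1 - P).rank + P.rank := rank_add_le _ _

variable [Fintype m] [DecidableEq n] {B : Matrix m n K}

theorem mul_inv_mul_transpose_mul_self (hB : IsUnit (Bᵀ * B)) :
    B * (Bᵀ * B)⁻¹ * Bᵀ * B = B := by
  rw [Matrix.mul_assoc _ Bᵀ, Matrix.mul_assoc, nonsing_inv_mul _ ((isUnit_iff_isUnit_det _).mp hB),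
    Matrix.mul_one]

theorem isIdempotentElem_mul_inv_mul_transpose (hB : IsUnit (Bᵀ * B)) :
    IsIdempotentElem (B * (Bᵀ * B)⁻¹ * Bᵀ) := by
  rw [IsIdempotentElem, ← Matrix.mul_assoc, ← Matrix.mul_assoc, mul_inv_mul_transpose_mul_self hB]

theorem rank_mul_inv_mul_transpose (hB : IsUnit (Bᵀ * B)) :
    (B * (Bᵀ * B)⁻¹ * Bᵀ).rank = Fintype.card n := by
  apply le_antisymm ((rank_mul_le_right _ _).trans (rank_le_card_height _))
  calc Fintype.card n = (Bᵀ * B).rank := (rank_of_isUnit _ hB).symm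
    _ ≤ B.rank := rank_mul_le_right _ _
    _ = (B * (Bᵀ * B)⁻¹ * Bᵀ * B).rank := by rw [mul_inv_mul_transpose_mul_self hB]
    _ ≤ (B * (Bᵀ * B)⁻¹ * Bᵀ).rank := rank_mul_le_left _ _

theorem rank_one_sub_mul_inv_mul_transpose [DecidableEq m] (hB : IsUnit (Bᵀ * B)) :
    (1 - B * (Bᵀ * B)⁻¹ * Bᵀ).rank = Fintype.card m - Fintype.card n := by
  have := rank_one_sub_add_rank_of_isIdempotentElem (isIdempotentElem_mul_inv_mul_transpose hB)
  rw [rank_mul_inv_mul_transpose hB] at this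
  omega

end Matrix

theorem stmt_10_general (NG Nm : ℕ)
    (d : Fin NG → ℝ) (hd : ∀ i, 0 < d i)
    (R : Matrix (Fin NG) (Fin Nm) ℝ)
    (S : Matrix (Fin Nm) (Fin Nm) ℝ) (hS : S = Rᵀ * Matrix.diagonal d * R)
    (hrank : S.rank = Nm)
    (sqrtΛ : Matrix (Fin NG) (Fin NG) ℝ)
    (hsqrt : sqrtΛ = Matrix.diagonal fun i => Real.sqrt (d i))
    (M : Matrix (Fin NG) (Fin NG) ℝ)
    (hM : M = 1 - sqrtΛ * R * S⁻¹ * Rᵀ * sqrtΛ)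
    (C : Matrix (Fin NG) (Fin NG) ℝ) (hC : C = sqrtΛ * M * sqrtΛ) :
    C.rank = NG - Nm := by
  have hsqrt_unit : IsUnit sqrtΛ.det := by
    rw [← isUnit_iff_isUnit_det, hsqrt, isUnit_diagonal, Pi.isUnit_iff]
    exact fun i => (Real.sqrt_pos.2 (hd i)).ne'.isUnit
  have hsqrt_symm : sqrtΛᵀ = sqrtΛ := by rw [hsqrt, diagonal_transpose]
  have hS_gram : S = (sqrtΛ * R)ᵀ * (sqrtΛ * R) := by
    have hsq : sqrtΛ * sqrtΛ = diagonal d := by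
      rw [hsqrt, diagonal_mul_diagonal]
      exact congrArg diagonal (funext fun i => Real.mul_self_sqrt (hd i).le)
    rw [hS, transpose_mul, hsqrt_symm, ← hsq]
    simp only [Matrix.mul_assoc]
  have hS_unit : IsUnit ((sqrtΛ * R)ᵀ * (sqrtΛ * R)) :=
    hS_gram ▸ isUnit_of_rank_eq_card (by rw [hrank, Fintype.card_fin])
  have hM_proj : M = 1 - sqrtΛ * R * ((sqrtΛ * R)ᵀ * (sqrtΛ * R))⁻¹ * (sqrtΛ * R)ᵀ := by
    rw [hM, ← hS_gram, transpose_mul, hsqrt_symm]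
    simp only [Matrix.mul_assoc]
  rw [hC, rank_mul_eq_left_of_isUnit_det _ _ hsqrt_unit,
    rank_mul_eq_right_of_isUnit_det _ _ hsqrt_unit, hM_proj,
    rank_one_sub_mul_inv_mul_transpose hS_unit, Fintype.card_fin, Fintype.card_fin]

/-- Dimension reduction of the conditional covariance: with Λ diagonal
positive, 0 < N_m < N_G, Σ = Rᵀ Λ R of rank N_m,
M = I − Λ^{1/2} R Σ⁻¹ Rᵀ Λ^{1/2} and C = Λ^{1/2} M Λ^{1/2}, we have
rank(C) = N_G − N_m. -/
theorem stmt_10 (NG Nm : ℕ) (h0 : 0 < Nm) (hlt : Nm < NG)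
    (d : Fin NG → ℝ) (hd : ∀ i, 0 < d i)
    (R : Matrix (Fin NG) (Fin Nm) ℝ)
    (S : Matrix (Fin Nm) (Fin Nm) ℝ) (hS : S = Rᵀ * Matrix.diagonal d * R)
    (hrank : S.rank = Nm)
    (sqrtΛ : Matrix (Fin NG) (Fin NG) ℝ)
    (hsqrt : sqrtΛ = Matrix.diagonal fun i => Real.sqrt (d i))
    (M : Matrix (Fin NG) (Fin NG) ℝ)
    (hM : M = 1 - sqrtΛ * R * S⁻¹ * Rᵀ * sqrtΛ)
    (C : Matrix (Fin NG) (Fin NG) ℝ) (hC : C = sqrtΛ * M * sqrtΛ) :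
    C.rank = NG - Nm :=
  stmt_10_general NG Nm d hd R S hS hrank sqrtΛ hsqrt M hM C hC
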